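/- Let K be a convex body in a Hilbert space H with B(c,r) ⊆ K ⊆ B(c,R), 0 < r < R, and let P be a two-dimensional affine plane through c. Set K₀ := K ∩ P, let n denote the (multivalued) outer unit normal function of K along ∂K, and ν the (multivalued) outer unit normal function of K₀ along ∂K₀ within P. Define the norm-distance modulus of continuity ω̄(v,τ) := sup{ ‖u − w‖ : x, y in the domain, ‖x − y‖ ≤ τ, u ∈ v(x), w ∈ v(y) }. Then ω̄(ν, τ) ≤ (2R/r)·ω̄(n, τ) for every τ > 0. -/

import Mathlib

open ENNReal Metric Topology
open scoped RealInnerProductSpace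

/-!
Let `x ∈ ∂K ∩ P` and let `w` be an outer normal of the section `K₀` at `x`. The half-plane
`{y ∈ P | ⟪w, y - x⟫ ≥ 0}` misses `int K`, so a Hahn–Banach hyperplane separating the two gives an
outer normal `u` of `K` at `x` whose restriction to the plane is `⟪u, w⟫ • w`, i.e. the
orthogonal projection of `u` onto `P - x` is a nonnegative multiple of `w`. Testing `u` against
the point `c + r • u ∈ K` gives `r ≤ ⟪u, x - c⟫ ≤ R ⟪u, w⟫`, so this projection has length at least
`r / R`. Projections are `1`-Lipschitz and normalizing vectors of length `≥ ρ` is `2 / ρ`-Lipschitz,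
whence `‖w - z‖ ≤ (2R / r) ‖u - v‖` pointwise.
-/

theorem edist_le_ofReal_mul_edist {α β : Type*} [PseudoMetricSpace α] [PseudoMetricSpace β]
    {a b : α} {c d : β} {C : ℝ} (hC : 0 ≤ C) (h : dist a b ≤ C * dist c d) :
    edist a b ≤ ENNReal.ofReal C * edist c d := by
  rw [edist_dist, edist_dist, ← ENNReal.ofReal_mul hC]
  exact ENNReal.ofReal_le_ofReal h

section Normed

variable {E : Type*} [NormedAddCommGroup E] [NormedSpace ℝ E]

theorem mul_norm_sub_le_two_mul_norm_smul_sub_smul {w z : E} (hw : ‖w‖ = 1) (hz : ‖z‖ = 1)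
    {s t : ℝ} (hs : 0 ≤ s) (ht : 0 ≤ t) : s * ‖w - z‖ ≤ 2 * ‖s • w - t • z‖ := by
  have hts : |t - s| ≤ ‖s • w - t • z‖ := by
    simpa [norm_smul, hw, hz, abs_of_nonneg hs, abs_of_nonneg ht, abs_sub_comm]
      using abs_norm_sub_norm_le (s • w) (t • z)
  calc s * ‖w - z‖ = ‖(s • w - t • z) + (t - s) • z‖ := by
        rw [← Real.norm_of_nonneg hs, ← norm_smul, Real.norm_of_nonneg hs]
        congr 1
        simp only [smul_sub, sub_smul]
        abel
    _ ≤ ‖s • w - t • z‖ + |t - s| := by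
        simpa [norm_smul, hz] using norm_add_le (s • w - t • z) ((t - s) • z)
    _ ≤ 2 * ‖s • w - t • z‖ := by linarith

end Normed

section InnerProduct

variable {H : Type*} [NormedAddCommGroup H] [InnerProductSpace ℝ H]

theorem norm_sub_le_of_inner_sub_eq_zero {V : Submodule ℝ H} {u v a b : H} (ha : a ∈ V)
    (hb : b ∈ V) (hua : ∀ p ∈ V, ⟪u - a, p⟫ = 0) (hvb : ∀ p ∈ V, ⟪v - b, p⟫ = 0) :
    ‖a - b‖ ≤ ‖u - v‖ := by
  have hab : a - b ∈ V := V.sub_mem ha hb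
  have hsq : ‖a - b‖ * ‖a - b‖ = ⟪u - v, a - b⟫ := by
    have : u - v = (u - a) - (v - b) + (a - b) := by abel
    rw [this, inner_add_left, inner_sub_left, hua _ hab, hvb _ hab,
      real_inner_self_eq_norm_mul_norm]
    ring
  have := real_inner_le_norm (u - v) (a - b)
  nlinarith [norm_nonneg (a - b), norm_nonneg (u - v)]

theorem inner_sub_inner_smul_eq_zero_of_nonneg_on_halfspace {V : Submodule ℝ H} {u w : H}
    (hwV : w ∈ V) (hw : ‖w‖ = 1) (h : ∀ p ∈ V, 0 ≤ ⟪w, p⟫ → 0 ≤ ⟪u, p⟫) :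
    ∀ p ∈ V, ⟪u - ⟪u, w⟫ • w, p⟫ = 0 := by
  intro p hp
  have hww : ⟪w, w⟫ = 1 := by rw [real_inner_self_eq_norm_mul_norm, hw, mul_one]
  set q := p - ⟪w, p⟫ • w
  have hqV : q ∈ V := V.sub_mem hp (V.smul_mem _ hwV)
  have hwq : ⟪w, q⟫ = 0 := by simp only [q, inner_sub_right, inner_smul_right, hww]; ring
  have huq : ⟪u, q⟫ = 0 := by
    have h₁ := h q hqV hwq.ge
    have h₂ := h (-q) (V.neg_mem hqV) (by rw [inner_neg_right, hwq, neg_zero])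
    rw [inner_neg_right] at h₂
    linarith
  simp only [q, inner_sub_right, inner_smul_right] at huq
  rw [inner_sub_left, real_inner_smul_left]
  linarith

theorem le_inner_sub_of_closedBall_subset {K : Set H} {c x u : H} {r : ℝ} (hr : 0 ≤ r)
    (hball : closedBall c r ⊆ K) (hu : ‖u‖ = 1) (hux : ∀ y ∈ K, ⟪u, y - x⟫ ≤ 0) :
    r ≤ ⟪u, x - c⟫ := by
  have hmem : c + r • u ∈ K := hball <| by
    rw [mem_closedBall, dist_eq_norm, add_sub_cancel_left, norm_smul, hu, mul_one,
      Real.norm_of_nonneg hr]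
  have := hux _ hmem
  have heq : c + r • u - x = r • u - (x - c) := by abel
  rw [heq, inner_sub_right, inner_smul_right, real_inner_self_eq_norm_mul_norm, hu] at this
  linarith

variable {K : Set H} {V : Submodule ℝ H} {x w : H}

theorem exists_separating_dual_of_section_normal (hK : Convex ℝ K) (hKint : (interior K).Nonempty)
    (hx : x ∈ closure K) (hwV : w ∈ V) (hw : w ≠ 0)
    (hsupp : ∀ y ∈ K, y - x ∈ V → ⟪w, y - x⟫ ≤ 0) :
    ∃ f : StrongDual ℝ H, f ≠ 0 ∧ (∀ y ∈ K, f y ≤ f x) ∧ ∀ p ∈ V, 0 ≤ ⟪w, p⟫ → 0 ≤ f p := by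
  set B : Set H := {y | y - x ∈ V ∧ 0 ≤ ⟪w, y - x⟫}
  have hBconv : Convex ℝ B :=
    (V.convex.inter (convex_halfSpace_ge (innerₗ H w).isLinear 0)).affine_preimage
      (AffineMap.id ℝ H - AffineMap.const ℝ H x)
  -- moving a point of `int K ∩ B` a little along `w` keeps it in `K` but makes `⟪w, · - x⟫ > 0`
  have hdisj : Disjoint (interior K) B := by
    refine Set.disjoint_left.2 fun y hy ⟨hyV, hyw⟩ => ?_
    have hpath : ∀ᶠ t in 𝓝[>] (0 : ℝ), y + t • w ∈ interior K := by
      have hc : Continuous fun t : ℝ => y + t • w := by fun_prop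
      exact ((hc.tendsto' 0 y (by simp)).eventually (isOpen_interior.mem_nhds hy)).filter_mono
        nhdsWithin_le_nhds
    obtain ⟨t, htK, ht⟩ := (hpath.and self_mem_nhdsWithin).exists
    have hle := hsupp (y + t • w) (interior_subset htK)
      (by rw [add_sub_right_comm]; exact V.add_mem hyV (V.smul_mem t hwV))
    rw [add_sub_right_comm, inner_add_right, real_inner_smul_right,
      real_inner_self_eq_norm_sq] at hle
    have : 0 < t * ‖w‖ ^ 2 := mul_pos ht (by positivity)
    linarith
  obtain ⟨f, α, hfint, hfB⟩ := geometric_hahn_banach_open hK.interior isOpen_interior hBconv hdisj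
  have hfK : ∀ y ∈ closure K, f y ≤ α := by
    rw [← hK.closure_interior_eq_closure_of_nonempty_interior hKint]
    exact closure_minimal (fun y hy => (hfint y hy).le) (isClosed_le f.continuous continuous_const)
  have hfx : f x = α := le_antisymm (hfK x hx) (hfB x (by simp [B]))
  obtain ⟨c, hc⟩ := hKint
  refine ⟨f, fun hf0 => ?_, fun y hy => hfx ▸ hfK y (subset_closure hy), fun p hp hwp => ?_⟩
  · have := hfint c hc
    simp only [hf0, zero_apply] at this hfx
    linarith
  · have := hfB (x + p) ⟨by simpa using hp, by simpa using hwp⟩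
    rw [map_add, hfx] at this
    linarith

theorem exists_unit_normal_of_section_normal [CompleteSpace H] (hK : Convex ℝ K)
    (hKint : (interior K).Nonempty) (hx : x ∈ closure K) (hwV : w ∈ V) (hw : w ≠ 0)
    (hsupp : ∀ y ∈ K, y - x ∈ V → ⟪w, y - x⟫ ≤ 0) :
    ∃ u : H, ‖u‖ = 1 ∧ (∀ y ∈ K, ⟪u, y - x⟫ ≤ 0) ∧ ∀ p ∈ V, 0 ≤ ⟪w, p⟫ → 0 ≤ ⟪u, p⟫ := by
  obtain ⟨f, hf0, hfK, hfV⟩ := exists_separating_dual_of_section_normal hK hKint hx hwV hw hsupp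
  set u₀ := (InnerProductSpace.toDual ℝ H).symm f
  have hu₀ : ∀ y, ⟪u₀, y⟫ = f y := fun y => InnerProductSpace.toDual_symm_apply
  have hu₀0 : 0 < ‖u₀‖ := norm_pos_iff.2 (by simpa [u₀] using hf0)
  refine ⟨‖u₀‖⁻¹ • u₀, by rw [norm_smul, norm_inv, norm_norm, inv_mul_cancel₀ hu₀0.ne'],
    fun y hy => ?_, fun p hp hwp => ?_⟩
  · rw [real_inner_smul_left, hu₀, map_sub]
    exact mul_nonpos_of_nonneg_of_nonpos (by positivity) (by linarith [hfK y hy])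
  · rw [real_inner_smul_left, hu₀]
    exact mul_nonneg (by positivity) (hfV p hp hwp)

theorem exists_unit_normal_of_section_normal_of_closedBall [CompleteSpace H] (hK : Convex ℝ K)
    {c : H} {r R : ℝ} (hr : 0 < r) (hball : closedBall c r ⊆ K) (hBall : K ⊆ closedBall c R)
    (hx : x ∈ closure K) (hxc : x - c ∈ V) (hwV : w ∈ V) (hw : ‖w‖ = 1)
    (hsupp : ∀ y ∈ K, y - x ∈ V → ⟪w, y - x⟫ ≤ 0) :
    ∃ u : H, ‖u‖ = 1 ∧ (∀ y ∈ K, ⟪u, y - x⟫ ≤ 0) ∧ (∀ p ∈ V, ⟪u - ⟪u, w⟫ • w, p⟫ = 0) ∧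
      r ≤ R * ⟪u, w⟫ := by
  have hKint : (interior K).Nonempty :=
    ⟨c, interior_maximal (ball_subset_closedBall.trans hball) isOpen_ball (mem_ball_self hr)⟩
  obtain ⟨u, hu, hux, hcone⟩ :=
    exists_unit_normal_of_section_normal hK hKint hx hwV (norm_ne_zero_iff.1 (by simp [hw])) hsupp
  have hproj := inner_sub_inner_smul_eq_zero_of_nonneg_on_halfspace hwV hw hcone
  have huw : 0 ≤ ⟪u, w⟫ := hcone w hwV (by rw [real_inner_self_eq_norm_sq, hw]; norm_num)
  have hxR : ‖x - c‖ ≤ R := by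
    simpa [dist_eq_norm] using closure_minimal hBall isClosed_closedBall hx
  refine ⟨u, hu, hux, hproj, ?_⟩
  calc r ≤ ⟪u, x - c⟫ := le_inner_sub_of_closedBall_subset hr.le hball hu hux
    _ = ⟪u, w⟫ * ⟪w, x - c⟫ := by
        have := hproj _ hxc
        rw [inner_sub_left, real_inner_smul_left] at this
        linarith
    _ ≤ ⟪u, w⟫ * R := by
        gcongr
        exact (real_inner_le_norm w (x - c)).trans (by rw [hw, one_mul]; exact hxR)
    _ = R * ⟪u, w⟫ := mul_comm _ _

theorem dist_le_of_inner_sub_inner_smul_eq_zero {r R : ℝ} (hr : 0 < r) (hR : 0 ≤ R)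
    {u v z : H} (hwV : w ∈ V) (hzV : z ∈ V) (hw : ‖w‖ = 1) (hz : ‖z‖ = 1)
    (hu : ∀ p ∈ V, ⟪u - ⟪u, w⟫ • w, p⟫ = 0) (hv : ∀ p ∈ V, ⟪v - ⟪v, z⟫ • z, p⟫ = 0)
    (hru : r ≤ R * ⟪u, w⟫) (hrv : r ≤ R * ⟪v, z⟫) :
    dist w z ≤ 2 * R / r * dist u v := by
  rw [dist_eq_norm, dist_eq_norm]
  have hs : 0 ≤ ⟪u, w⟫ := (pos_of_mul_pos_right (hr.trans_le hru) hR).le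
  have ht : 0 ≤ ⟪v, z⟫ := (pos_of_mul_pos_right (hr.trans_le hrv) hR).le
  have hproj := norm_sub_le_of_inner_sub_eq_zero (V.smul_mem _ hwV) (V.smul_mem _ hzV) hu hv
  have hnormalize := mul_norm_sub_le_two_mul_norm_smul_sub_smul hw hz hs ht
  rw [div_mul_eq_mul_div, le_div_iff₀ hr]
  calc ‖w - z‖ * r ≤ ‖w - z‖ * (R * ⟪u, w⟫) := mul_le_mul_of_nonneg_left hru (norm_nonneg _)
    _ = R * (⟪u, w⟫ * ‖w - z‖) := by ring
    _ ≤ R * (2 * ‖u - v‖) := mul_le_mul_of_nonneg_left (by linarith) hR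
    _ = 2 * R * ‖u - v‖ := by ring

end InnerProduct

theorem section_modulus_le_space_modulus_general
    {H : Type*} [NormedAddCommGroup H] [InnerProductSpace ℝ H] [CompleteSpace H]
    (K : Set H) (hKconv : Convex ℝ K)
    (c : H) (r R : ℝ) (hr : 0 < r) (hrR : r < R)
    (hball : Metric.closedBall c r ⊆ K) (hBall : K ⊆ Metric.closedBall c R)
    (V : Submodule ℝ H)
    (P : Set H) (hP : P = {z : H | z - c ∈ V})
    (K₀ : Set H) (hK₀ : K₀ = K ∩ P)
    (n : H → Set H)
    (hn : ∀ x : H, n x = {u : H | ‖u‖ = 1 ∧ ∀ y ∈ K, (inner ℝ u (y - x) : ℝ) ≤ 0})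
    (ν : H → Set H)
    (hν : ∀ x : H, ν x = {w : H | w ∈ V ∧ ‖w‖ = 1 ∧ ∀ y ∈ K₀, (inner ℝ w (y - x) : ℝ) ≤ 0})
    (τ : ℝ) :
    sSup {e : ℝ≥0∞ | ∃ x ∈ frontier K ∩ P, ∃ y ∈ frontier K ∩ P,
        ∃ w ∈ ν x, ∃ z ∈ ν y, dist x y ≤ τ ∧ e = edist w z}
      ≤ ENNReal.ofReal (2 * R / r) *
        sSup {e : ℝ≥0∞ | ∃ x ∈ frontier K, ∃ y ∈ frontier K,
          ∃ u ∈ n x, ∃ v ∈ n y, dist x y ≤ τ ∧ e = edist u v} := by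
  have hR : 0 < R := hr.trans hrR
  have hnormal : ∀ x ∈ frontier K ∩ P, ∀ w ∈ ν x, w ∈ V ∧ ‖w‖ = 1 ∧
      ∃ u ∈ n x, (∀ p ∈ V, ⟪u - ⟪u, w⟫ • w, p⟫ = 0) ∧ r ≤ R * ⟪u, w⟫ := by
    rintro x ⟨hxK, hxP⟩ w hw
    rw [hν, hK₀] at hw
    obtain ⟨hwV, hw1, hwsupp⟩ := hw
    rw [hP] at hxP hwsupp
    obtain ⟨u, hu1, hux, hproj, hru⟩ := exists_unit_normal_of_section_normal_of_closedBall hKconv hr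
      hball hBall (frontier_subset_closure hxK) hxP hwV hw1
      fun y hy hyx => hwsupp y ⟨hy, by simpa using V.add_mem hyx hxP⟩
    exact ⟨hwV, hw1, u, by rw [hn]; exact ⟨hu1, hux⟩, hproj, hru⟩
  refine sSup_le ?_
  rintro _ ⟨x, hx, y, hy, w, hw, z, hz, hxy, rfl⟩
  obtain ⟨hwV, hw1, u, hun, hu, hru⟩ := hnormal x hx w hw
  obtain ⟨hzV, hz1, v, hvn, hv, hrv⟩ := hnormal y hy z hz
  calc edist w z ≤ ENNReal.ofReal (2 * R / r) * edist u v :=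
        edist_le_ofReal_mul_edist (by positivity)
          (dist_le_of_inner_sub_inner_smul_eq_zero hr hR.le hwV hzV hw1 hz1 hu hv hru hrv)
    _ ≤ _ := by
        gcongr
        exact le_sSup ⟨x, hx.1, y, hy.1, u, hun, v, hvn, hxy, rfl⟩

/-- Comparison of the norm-distance moduli of continuity of the outer unit normal
functions of a convex body `K` (with `B(c,r) ⊆ K ⊆ B(c,R)`) and of its section
`K₀ = K ∩ P` by a two-dimensional affine plane `P = c + V`:
`ω̄(ν, τ) ≤ (2R/r)·ω̄(n, τ)` for every `τ > 0`. -/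
theorem section_modulus_le_space_modulus
    {H : Type*} [NormedAddCommGroup H] [InnerProductSpace ℝ H] [CompleteSpace H]
    (K : Set H) (hKconv : Convex ℝ K) (hKcl : IsClosed K)
    (hKbd : Bornology.IsBounded K) (hKint : (interior K).Nonempty)
    (c : H) (r R : ℝ) (hr : 0 < r) (hrR : r < R)
    (hball : Metric.closedBall c r ⊆ K) (hBall : K ⊆ Metric.closedBall c R)
    (V : Submodule ℝ H) (hVcl : IsClosed (V : Set H))
    (hV2 : Module.finrank ℝ V = 2)
    (P : Set H) (hP : P = {z : H | z - c ∈ V})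
    (K₀ : Set H) (hK₀ : K₀ = K ∩ P)
    (n : H → Set H)
    (hn : ∀ x : H, n x = {u : H | ‖u‖ = 1 ∧ ∀ y ∈ K, (inner ℝ u (y - x) : ℝ) ≤ 0})
    (ν : H → Set H)
    (hν : ∀ x : H, ν x = {w : H | w ∈ V ∧ ‖w‖ = 1 ∧ ∀ y ∈ K₀, (inner ℝ w (y - x) : ℝ) ≤ 0})
    (τ : ℝ) (hτ : 0 < τ) :
    sSup {e : ℝ≥0∞ | ∃ x ∈ frontier K ∩ P, ∃ y ∈ frontier K ∩ P,
        ∃ w ∈ ν x, ∃ z ∈ ν y, dist x y ≤ τ ∧ e = edist w z}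
      ≤ ENNReal.ofReal (2 * R / r) *
        sSup {e : ℝ≥0∞ | ∃ x ∈ frontier K, ∃ y ∈ frontier K,
          ∃ u ∈ n x, ∃ v ∈ n y, dist x y ≤ τ ∧ e = edist u v} :=
  section_modulus_le_space_modulus_general K hKconv c r R hr hrR hball hBall V P hP K₀ hK₀ n hn ν hν
    τ
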